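/- arXiv:2511.11138 — 3 statements merged into one kernel-verified Lean document; each statement's English description precedes it below -/
import Mathlib

section
/- The hyperedge-based Laplacian L_h = 2·I - (1/(l-1))·A of the l-lattice hypergraph has eigenvalues 0 with multiplicity 1, l/(l-1) with multiplicity 2(l-1), and 2l/(l-1) with multiplicity (l-1)². -/
open Matrix Kronecker Module

-- similarity lemma
lemma sim_dim {n : Type*} [Fintype n] [DecidableEq n] (M S T Δ : Matrix n n ℝ)
    (hST : S * T = 1) (hTS : T * S = 1) (h : M * S = S * Δ) (μ : ℝ) :
    finrank ℝ ↥(Module.End.eigenspace (Matrix.toLin' M) μ)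
      = finrank ℝ ↥(Module.End.eigenspace (Matrix.toLin' Δ) μ) := by
  have hTM : T * M = Δ * T := by
    calc T * M = T * M * (S * T) := by rw [hST, mul_one]
    _ = T * (M * S) * T := by simp [mul_assoc]
    _ = T * (S * Δ) * T := by rw [h]
    _ = (T * S) * (Δ * T) := by simp [mul_assoc]
    _ = Δ * T := by rw [hTS, one_mul]
  let e : (n → ℝ) ≃ₗ[ℝ] (n → ℝ) := LinearEquiv.ofLinear (toLin' S) (toLin' T)
    (by rw [← toLin'_mul, hST, toLin'_one]) (by rw [← toLin'_mul, hTS, toLin'_one])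
  have key : Module.End.eigenspace (Matrix.toLin' M) μ
      = Submodule.map (e : (n → ℝ) →ₗ[ℝ] (n → ℝ)) (Module.End.eigenspace (Matrix.toLin' Δ) μ) := by
    ext x
    simp only [Submodule.mem_map, Module.End.mem_eigenspace_iff]
    constructor
    · intro hx
      refine ⟨toLin' T x, ?_, ?_⟩
      · have : toLin' Δ (toLin' T x) = toLin' (Δ * T) x := by rw [toLin'_mul]; rfl
        rw [this, ← hTM, toLin'_mul]
        show toLin' T (toLin' M x) = μ • toLin' T x
        rw [hx, _root_.map_smul]
      · show toLin' S (toLin' T x) = x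
        rw [← Matrix.toLin'_mul_apply, hST, toLin'_one]; rfl
    · rintro ⟨y, hy, rfl⟩
      show toLin' M (toLin' S y) = μ • toLin' S y
      rw [← Matrix.toLin'_mul_apply, h, Matrix.toLin'_mul_apply, hy, _root_.map_smul]
  rw [key, LinearEquiv.finrank_map_eq]

lemma diag_dim {n : Type*} [Fintype n] [DecidableEq n] (d : n → ℝ) (μ : ℝ) :
    finrank ℝ ↥(Module.End.eigenspace (Matrix.toLin' (diagonal d)) μ)
      = Fintype.card {i // d i = μ} := by
  classical
  have h1 : Module.End.eigenspace (Matrix.toLin' (diagonal d)) μ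
      = LinearMap.ker (Matrix.toLin' (diagonal (fun i => d i - μ))) := by
    rw [Module.End.eigenspace_def]
    congr 1
    have : diagonal (fun i => d i - μ) = diagonal d - μ • 1 := by
      ext i j
      by_cases h : i = j <;> simp [Matrix.diagonal_apply, Matrix.one_apply, h]
    rw [this, map_sub, _root_.map_smul, Matrix.toLin'_one]
    rfl
  rw [h1]
  have hrn := LinearMap.finrank_range_add_finrank_ker (Matrix.toLin' (diagonal (fun i => d i - μ)))
  have hrank : finrank ℝ ↥(LinearMap.range (Matrix.toLin' (diagonal fun i => d i - μ)))
      = Fintype.card {i // ¬ d i = μ} := by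
    have : Matrix.toLin' (diagonal fun i => d i - μ) = (diagonal fun i => d i - μ).mulVecLin := by
      ext v i; simp [Matrix.toLin'_apply, Matrix.mulVecLin]
    rw [this]
    have := Matrix.rank_diagonal (fun i => d i - μ)
    rw [Matrix.rank] at this
    rw [this]
    exact Fintype.card_congr (Equiv.subtypeEquivRight (fun i => by
      constructor <;> intro h <;> [exact fun he => h (by rw [he]; ring); exact sub_ne_zero.mpr h]))
  rw [hrank] at hrn
  have hc : Fintype.card {i // ¬ d i = μ} = Fintype.card n - Fintype.card {i // d i = μ} :=
    Fintype.card_subtype_compl _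
  have hle : Fintype.card {i // d i = μ} ≤ Fintype.card n := Fintype.card_subtype_le _
  have hfr : finrank ℝ (n → ℝ) = Fintype.card n := Module.finrank_fintype_fun_eq_card ℝ
  omega

section
variable (l : ℕ) [NeZero l]

noncomputable def Cmat : Matrix (Fin l) (Fin l) ℝ :=
  of fun a j => if j = 0 then 1 else (if a = j then 1 else 0) - (if a = 0 then 1 else 0)

noncomputable def Bmat : Matrix (Fin l) (Fin l) ℝ :=
  of fun a b => if a = 0 then (l:ℝ)⁻¹ else (if a = b then 1 else 0) - (l:ℝ)⁻¹

lemma colsum (j : Fin l) : ∑ a, Cmat l a j = if j = 0 then (l:ℝ) else 0 := by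
  by_cases hj : j = 0 <;>
    simp [Cmat, hj, Finset.sum_sub_distrib, Finset.sum_ite_eq', Finset.card_univ]

lemma BC : Bmat l * Cmat l = 1 := by
  have hl0 : (l:ℝ) ≠ 0 := Nat.cast_ne_zero.mpr (NeZero.ne l)
  ext a b
  rw [Matrix.mul_apply]
  by_cases ha : a = 0
  · have : ∀ c, Bmat l a c * Cmat l c b = (l:ℝ)⁻¹ * Cmat l c b := fun c => by
      simp [Bmat, ha]
    simp_rw [this]
    rw [← Finset.mul_sum, colsum]
    by_cases hb : b = 0
    · simp [ha, hb, Matrix.one_apply, inv_mul_cancel₀ hl0]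
    · have : ¬ (0:Fin l) = b := fun h => hb h.symm
      simp [ha, hb, Matrix.one_apply, this]
  · have : ∀ c, Bmat l a c * Cmat l c b
        = (if a = c then 1 else 0) * Cmat l c b - (l:ℝ)⁻¹ * Cmat l c b := fun c => by
      simp [Bmat, ha, sub_mul]
    simp_rw [this]
    rw [Finset.sum_sub_distrib, ← Finset.mul_sum, colsum]
    simp only [ite_mul, one_mul, zero_mul, Finset.sum_ite_eq, Finset.mem_univ, if_true]
    by_cases hb : b = 0
    · simp [Cmat, hb, ha, Matrix.one_apply, inv_mul_cancel₀ hl0]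
    · simp [Cmat, hb, ha, Matrix.one_apply, mul_zero, eq_comm]

noncomputable def dvec : Fin l → ℝ := fun i => if i = 0 then (l:ℝ) - 1 else -1

lemma KC : ((of fun _ _ => (1:ℝ)) - 1) * Cmat l = Cmat l * diagonal (dvec l) := by
  ext a j
  rw [Matrix.mul_apply, Matrix.mul_diagonal]
  have : ∀ c, ((of fun _ _ => (1:ℝ)) - 1) a c * Cmat l c j
      = Cmat l c j - (if a = c then 1 else 0) * Cmat l c j := fun c => by
    simp [Matrix.one_apply, Matrix.sub_apply, sub_mul]
  simp_rw [this]
  rw [Finset.sum_sub_distrib, colsum]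
  simp only [ite_mul, one_mul, zero_mul, Finset.sum_ite_eq, Finset.mem_univ, if_true]
  by_cases hj : j = 0
  · simp [Cmat, dvec, hj]
  · simp [Cmat, dvec, hj, mul_neg, mul_one]

end



/-- The hyperedge-based Laplacian `L_h = 2·I - (1/(l-1))·A` of the `l`-lattice
hypergraph has eigenvalues `0` (multiplicity 1), `l/(l-1)` (multiplicity `2(l-1)`)
and `2l/(l-1)` (multiplicity `(l-1)²`). -/
theorem stmt3 (l : ℕ) (hl : 2 ≤ l)
    (K : Matrix (Fin l) (Fin l) ℝ)
    (hK : K = (Matrix.of fun _ _ => (1:ℝ)) - 1)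
    (Acl Lh : Matrix (Fin l × Fin l) (Fin l × Fin l) ℝ)
    (hA : Acl = K ⊗ₖ (1 : Matrix (Fin l) (Fin l) ℝ)
        + (1 : Matrix (Fin l) (Fin l) ℝ) ⊗ₖ K)
    (hL : Lh = (2:ℝ) • (1 : Matrix (Fin l × Fin l) (Fin l × Fin l) ℝ)
        - (((l:ℝ)-1)⁻¹) • Acl) :
    Module.finrank ℝ ↥(Module.End.eigenspace (Matrix.toLin' Lh) 0) = 1 ∧
    Module.finrank ℝ ↥(Module.End.eigenspace (Matrix.toLin' Lh) ((l:ℝ)/((l:ℝ)-1))) = 2*(l-1) ∧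
    Module.finrank ℝ ↥(Module.End.eigenspace (Matrix.toLin' Lh) (2*(l:ℝ)/((l:ℝ)-1))) = (l-1)^2 := by
  haveI : NeZero l := ⟨by omega⟩
  have hl2 : (2:ℝ) ≤ (l:ℝ) := by exact_mod_cast hl
  have hl0 : (l:ℝ) ≠ 0 := by positivity
  have hl1 : (l:ℝ) - 1 ≠ 0 := by intro h; nlinarith
  set c : ℝ := ((l:ℝ)-1)⁻¹ with hc
  set Λ : Fin l × Fin l → ℝ := fun p => 2 - c * (dvec l p.1 + dvec l p.2) with hΛ
  set S := Cmat l ⊗ₖ Cmat l with hS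
  set T := Bmat l ⊗ₖ Bmat l with hT
  have hTS : T * S = 1 := by
    rw [hT, hS, ← Matrix.mul_kronecker_mul, BC, Matrix.one_kronecker_one]
  have hST : S * T = 1 := mul_eq_one_comm.mp hTS
  -- the key intertwining relation
  have hMS : Lh * S = S * diagonal Λ := by
    have hAS : Acl * S = S * diagonal (fun p : Fin l × Fin l => dvec l p.1 + dvec l p.2) := by
      have hdd : (diagonal (fun p : Fin l × Fin l => dvec l p.1 + dvec l p.2))
          = diagonal (dvec l) ⊗ₖ (1 : Matrix (Fin l) (Fin l) ℝ)
            + (1 : Matrix (Fin l) (Fin l) ℝ) ⊗ₖ diagonal (dvec l) := by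
        rw [← Matrix.diagonal_one, Matrix.diagonal_kronecker_diagonal,
          Matrix.diagonal_kronecker_diagonal, ← Matrix.diagonal_add]
        congr 1; funext p; simp [Pi.one_apply]; ring
      rw [hA, hdd, add_mul, mul_add, hS, ← Matrix.mul_kronecker_mul, ← Matrix.mul_kronecker_mul,
        ← Matrix.mul_kronecker_mul, ← Matrix.mul_kronecker_mul, hK, KC, Matrix.one_mul, Matrix.mul_one]
    have hdiagΛ : diagonal Λ = (2:ℝ) • (1 : Matrix (Fin l × Fin l) (Fin l × Fin l) ℝ)
        - c • diagonal (fun p : Fin l × Fin l => dvec l p.1 + dvec l p.2) := by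
      ext p q
      by_cases h : p = q <;>
        simp [hΛ, Matrix.diagonal_apply, Matrix.one_apply, h, Matrix.sub_apply,
          Matrix.smul_apply]
    rw [hL, hdiagΛ, sub_mul, mul_sub, smul_mul_assoc, smul_mul_assoc, mul_smul_comm,
      mul_smul_comm, Matrix.one_mul, Matrix.mul_one, hAS]
  have hdim : ∀ μ : ℝ, finrank ℝ ↥(Module.End.eigenspace (Matrix.toLin' Lh) μ)
      = Fintype.card {p : Fin l × Fin l // Λ p = μ} := fun μ => by
    rw [sim_dim Lh S T (diagonal Λ) hST hTS hMS μ, diag_dim]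
  -- values of Λ
  have hv1 : (2:ℝ) - c * (((l:ℝ)-1) + ((l:ℝ)-1)) = 0 := by
    rw [hc]; field_simp; ring
  have hv2 : (2:ℝ) - c * (((l:ℝ)-1) + (-1)) = (l:ℝ)/((l:ℝ)-1) := by
    rw [hc]; field_simp; ring
  have hv3 : (2:ℝ) - c * ((-1) + (-1)) = 2*(l:ℝ)/((l:ℝ)-1) := by
    rw [hc]; field_simp; ring
  have hne10 : (l:ℝ)/((l:ℝ)-1) ≠ 0 := div_ne_zero hl0 hl1
  have hne20 : 2*(l:ℝ)/((l:ℝ)-1) ≠ 0 := div_ne_zero (by positivity) hl1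
  have hne12 : (l:ℝ)/((l:ℝ)-1) ≠ 2*(l:ℝ)/((l:ℝ)-1) := by
    intro h; rw [div_eq_div_iff hl1 hl1] at h; nlinarith
  have hΛval : ∀ p : Fin l × Fin l, Λ p = (if p.1 = 0 then (if p.2 = 0 then (0:ℝ)
      else (l:ℝ)/((l:ℝ)-1)) else (if p.2 = 0 then (l:ℝ)/((l:ℝ)-1)
      else 2*(l:ℝ)/((l:ℝ)-1))) := fun p => by
    by_cases h1 : p.1 = 0 <;> by_cases h2 : p.2 = 0 <;>
      simp only [hΛ, dvec, h1, h2, if_true, if_false, if_pos, if_neg] <;>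
      [exact hv1; exact hv2; exact (by rw [← hv2]; ring_nf); exact hv3]
  -- cardinalities
  have card_ne : Fintype.card {i : Fin l // ¬ i = 0} = l - 1 := by
    rw [Fintype.card_subtype_compl, Fintype.card_subtype_eq, Fintype.card_fin]
  have card_eq0 : Fintype.card {i : Fin l // i = 0} = 1 := Fintype.card_subtype_eq _
  refine ⟨?_, ?_, ?_⟩
  · rw [hdim 0]
    have : ∀ p : Fin l × Fin l, Λ p = 0 ↔ (p.1 = 0 ∧ p.2 = 0) := fun p => by
      rw [hΛval p]
      by_cases h1 : p.1 = 0 <;> by_cases h2 : p.2 = 0 <;> simp [h1, h2, hne10, hne20, hne10.symm, hne20.symm]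
    have e1 : {x : Fin l × Fin l // x.1 = 0 ∧ x.2 = 0}
        ≃ {a : Fin l // a = 0} × {b : Fin l // b = 0} :=
      Equiv.subtypeProdEquivProd (p := fun a : Fin l => a = 0) (q := fun b : Fin l => b = 0)
    rw [Fintype.card_congr (Equiv.subtypeEquivRight this),
      Fintype.card_congr e1, Fintype.card_prod, card_eq0]
  · rw [hdim ((l:ℝ)/((l:ℝ)-1))]
    have : ∀ p : Fin l × Fin l, Λ p = (l:ℝ)/((l:ℝ)-1)
        ↔ ((p.1 = 0 ∧ ¬ p.2 = 0) ∨ (¬ p.1 = 0 ∧ p.2 = 0)) := fun p => by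
      rw [hΛval p]
      by_cases h1 : p.1 = 0 <;> by_cases h2 : p.2 = 0 <;>
        simp [h1, h2, hne10, hne20, hne12, hne10.symm, hne20.symm, hne12.symm]
    have hdisj : Disjoint (fun p : Fin l × Fin l => p.1 = 0 ∧ ¬ p.2 = 0)
        (fun p : Fin l × Fin l => ¬ p.1 = 0 ∧ p.2 = 0) := by
      rw [Pi.disjoint_iff]; intro x
      rw [Prop.disjoint_iff]; tauto
    have e1 : {x : Fin l × Fin l // x.1 = 0 ∧ ¬ x.2 = 0}
        ≃ {a : Fin l // a = 0} × {b : Fin l // ¬ b = 0} :=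
      Equiv.subtypeProdEquivProd (p := fun a : Fin l => a = 0) (q := fun b : Fin l => ¬ b = 0)
    have e2 : {x : Fin l × Fin l // ¬ x.1 = 0 ∧ x.2 = 0}
        ≃ {a : Fin l // ¬ a = 0} × {b : Fin l // b = 0} :=
      Equiv.subtypeProdEquivProd (p := fun a : Fin l => ¬ a = 0) (q := fun b : Fin l => b = 0)
    rw [Fintype.card_congr (Equiv.subtypeEquivRight this),
      Fintype.card_subtype_or_disjoint _ _ hdisj,
      Fintype.card_congr e1, Fintype.card_congr e2,
      Fintype.card_prod, Fintype.card_prod, card_eq0, card_ne]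
    omega
  · rw [hdim (2*(l:ℝ)/((l:ℝ)-1))]
    have : ∀ p : Fin l × Fin l, Λ p = 2*(l:ℝ)/((l:ℝ)-1)
        ↔ (¬ p.1 = 0 ∧ ¬ p.2 = 0) := fun p => by
      rw [hΛval p]
      by_cases h1 : p.1 = 0 <;> by_cases h2 : p.2 = 0 <;>
        simp [h1, h2, hne10, hne20, hne12, hne10.symm, hne20.symm, hne12.symm]
    have e1 : {x : Fin l × Fin l // ¬ x.1 = 0 ∧ ¬ x.2 = 0}
        ≃ {a : Fin l // ¬ a = 0} × {b : Fin l // ¬ b = 0} :=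
      Equiv.subtypeProdEquivProd (p := fun a : Fin l => ¬ a = 0) (q := fun b : Fin l => ¬ b = 0)
    rw [Fintype.card_congr (Equiv.subtypeEquivRight this),
      Fintype.card_congr e1, Fintype.card_prod, card_ne]
    ring
end

section
/- The eigenvalues of the one-dimensional sliding-window circulant adjacency on ℤ_ℓ admit the closed form α(k) = sin²(rπk/ℓ)/sin²(πk/ℓ) - r for k = 1,…,ℓ-1, and α(0) = r(r-1). -/
open Real Finset

lemma dirichlet_aux (x : ℝ) : ∀ n : ℕ,
    Real.sin x * (1 + 2 * ∑ d ∈ Finset.Icc 1 n, Real.cos (2 * d * x))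
      = Real.sin ((2 * n + 1) * x) := by
  intro n
  induction n with
  | zero => norm_num
  | succ n ih =>
    rw [Finset.sum_Icc_succ_top (by omega : 1 ≤ n + 1)]
    have e1 : ((2 * ((n:ℝ) + 1) + 1)) * x = 2 * ((n:ℝ)+1) * x + x := by ring
    have e2 : ((2 * (n:ℝ) + 1)) * x = 2 * ((n:ℝ)+1) * x - x := by ring
    push_cast
    rw [e1, Real.sin_add]
    rw [e2, Real.sin_sub] at ih
    nlinarith [ih]

lemma fejer_aux (x : ℝ) : ∀ r : ℕ,
    Real.sin x ^ 2 * ((r : ℝ) + 2 * ∑ d ∈ Finset.Icc 1 (r - 1),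
      ((r : ℝ) - d) * Real.cos (2 * d * x)) = Real.sin (r * x) ^ 2 := by
  intro r
  induction r with
  | zero => simp
  | succ r ih =>
    have hsplit : ∑ d ∈ Finset.Icc 1 ((r+1) - 1), (((r:ℝ)+1) - d) * Real.cos (2 * d * x)
        = (∑ d ∈ Finset.Icc 1 (r - 1), ((r:ℝ) - d) * Real.cos (2 * d * x))
          + ∑ d ∈ Finset.Icc 1 r, Real.cos (2 * d * x) := by
      simp only [Nat.add_sub_cancel]
      have h1 : ∑ d ∈ Finset.Icc 1 r, (((r:ℝ)+1) - d) * Real.cos (2 * d * x)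
          = (∑ d ∈ Finset.Icc 1 r, ((r:ℝ) - d) * Real.cos (2 * d * x))
            + ∑ d ∈ Finset.Icc 1 r, Real.cos (2 * d * x) := by
        rw [← Finset.sum_add_distrib]
        exact Finset.sum_congr rfl (fun d _ => by ring)
      rw [h1]
      congr 1
      rcases Nat.eq_zero_or_pos r with h | h
      · subst h; simp
      · obtain ⟨m, rfl⟩ : ∃ m, r = m + 1 := ⟨r - 1, by omega⟩
        rw [Finset.sum_Icc_succ_top (by omega : 1 ≤ m + 1)]
        simp
    have hd := dirichlet_aux x r
    -- key quadratic identity: sin((r+1)x)^2 = sin(rx)^2 + sin x * sin((2r+1)x)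
    have key : Real.sin (((r:ℝ)+1) * x) ^ 2
        = Real.sin ((r:ℝ) * x) ^ 2 + Real.sin x * Real.sin ((2*(r:ℝ)+1) * x) := by
      have e1 : ((r:ℝ)+1) * x = (r:ℝ) * x + x := by ring
      have e2 : (2*(r:ℝ)+1) * x = (r:ℝ) * x + ((r:ℝ) * x + x) := by ring
      rw [e1, e2, Real.sin_add ((r:ℝ)*x) ((r:ℝ)*x + x), Real.sin_add, Real.cos_add]
      nlinarith [Real.sin_sq_add_cos_sq x, Real.sin_sq_add_cos_sq ((r:ℝ)*x)]
    push_cast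
    push_cast at hsplit
    rw [hsplit, key]
    linear_combination ih + Real.sin x * hd

lemma gauss_aux : ∀ n : ℕ, ∑ d ∈ Finset.Icc 1 n, (d:ℝ) = n * (n+1) / 2 := by
  intro n
  induction n with
  | zero => simp
  | succ n ih =>
    rw [Finset.sum_Icc_succ_top (by omega : 1 ≤ n + 1), ih]
    push_cast
    ring

/-- The eigenvalues of the one-dimensional sliding-window circulant adjacency
on `ℤ_ℓ` admit the closed form `α(k) = sin²(rπk/ℓ)/sin²(πk/ℓ) - r` for
`k = 1,…,ℓ-1`, and `α(0) = r(r-1)`. -/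
theorem stmt13 (ℓ r : ℕ) (hl : 2 ≤ ℓ) (hr : 2 ≤ r) (hrl : 2 * r ≤ ℓ)
    (α : ℕ → ℝ)
    (hα : α = fun (k : ℕ) => 2 * ∑ d ∈ Finset.Icc 1 (r - 1),
        ((r : ℝ) - d) * Real.cos (2 * Real.pi * (k:ℝ) * d / ℓ)) :
    (∀ k : ℕ, 1 ≤ k → k ≤ ℓ - 1 →
      α k = Real.sin (r * Real.pi * k / ℓ)^2 / Real.sin (Real.pi * k / ℓ)^2 - r) ∧
    α 0 = r * (r - 1) := by
  have hl0 : (0:ℝ) < ℓ := by positivity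
  constructor
  · intro k hk1 hk2
    set x : ℝ := Real.pi * k / ℓ with hx
    have hxpos : 0 < x := by
      apply div_pos (by positivity) hl0
    have hxlt : x < Real.pi := by
      rw [hx, div_lt_iff₀ hl0]
      have hk : (k:ℝ) < ℓ := by exact_mod_cast (by omega : k < ℓ)
      nlinarith [Real.pi_pos]
    have hs : Real.sin x ≠ 0 := ne_of_gt (Real.sin_pos_of_pos_of_lt_pi hxpos hxlt)
    have hs2 : Real.sin x ^ 2 ≠ 0 := pow_ne_zero _ hs
    have hf := fejer_aux x r
    have harg : ∀ d : ℕ, 2 * Real.pi * (k:ℝ) * d / ℓ = 2 * d * x := by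
      intro d; rw [hx]; ring
    have hα' : α k = 2 * ∑ d ∈ Finset.Icc 1 (r - 1),
        ((r : ℝ) - d) * Real.cos (2 * d * x) := by
      rw [hα]
      simp only
      congr 1
      exact Finset.sum_congr rfl (fun d _ => by rw [harg d])
    have hr' : Real.sin ((r:ℝ) * Real.pi * k / ℓ) = Real.sin ((r:ℝ) * x) := by
      rw [hx]; ring_nf
    rw [hα', hr', eq_sub_iff_add_eq, eq_div_iff hs2]
    linear_combination hf
  · rw [hα]
    simp only [Nat.cast_zero, mul_zero, zero_mul, zero_div, Real.cos_zero, mul_one]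
    have hsum : ∑ d ∈ Finset.Icc 1 (r-1), ((r:ℝ) - d)
        = (r:ℝ) * (r - 1) / 2 := by
      rw [Finset.sum_sub_distrib, Finset.sum_const, gauss_aux]
      have hc : ((r-1 : ℕ):ℝ) = (r:ℝ) - 1 := by
        have : (1:ℕ) ≤ r := by omega
        push_cast [Nat.cast_sub this]; ring
      rw [Nat.card_Icc]
      simp only [Nat.add_sub_cancel]
      rw [nsmul_eq_mul, hc]
      ring
    rw [hsum]
    ring
end

section
/- For 1 ≤ k ≤ ℓ-1 and 2 ≤ r with 2r ≤ ℓ, the circulant eigenvalue α(k) = 2 Σ_{d=1}^{r-1}(r-d)cos(2πkd/ℓ) satisfies α(k) < r(r-1); consequently, the clique Laplacian mr(r-1)I - A_cl of the periodic hyperlattice on ℤ_ℓ^m with window size r has 0 as a simple eigenvalue, i.e., the hyperlattice is connected. -/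
open Matrix

lemma gauss14 (r : ℕ) (hr : 2 ≤ r) :
    ∑ d ∈ Finset.Icc 1 (r-1), ((r:ℝ) - d) = r * ((r:ℝ) - 1) / 2 := by
  have hS : (∑ d ∈ Finset.Icc 1 (r-1), (d:ℝ)) * 2 = ((r:ℝ) - 1) * r := by
    have := Finset.sum_range_id_mul_two r
    have h2 : Finset.Icc 1 (r-1) = Finset.range r \ {0} := by
      ext x; simp [Finset.mem_Icc, Finset.mem_range]; omega
    have h3 : ∑ d ∈ Finset.Icc 1 (r-1), (d:ℝ) = ∑ d ∈ Finset.range r, (d:ℝ) := by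
      rw [h2, Finset.sum_sdiff_eq_sub (by simp [Finset.singleton_subset_iff]; omega)]
      simp
    rw [h3]
    have h4 : ((∑ i ∈ Finset.range r, i : ℕ) : ℝ) * 2 = ((r * (r-1) : ℕ) : ℝ) := by
      exact_mod_cast congrArg (Nat.cast : ℕ → ℝ) this
    push_cast [Nat.cast_sub (by omega : 1 ≤ r)] at h4
    linarith
  rw [Finset.sum_sub_distrib, Finset.sum_const, Nat.card_Icc]
  simp only [nsmul_eq_mul]
  have hc : ((r - 1 + 1 - 1 : ℕ) : ℝ) = (r:ℝ) - 1 := by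
    push_cast [Nat.sub_add_cancel (by omega : 1 ≤ r)]; ring_nf
    rw [Nat.cast_sub (by omega : 1 ≤ r)]; push_cast; ring
  rw [hc]; linarith

lemma part1of14 (ℓ r : ℕ) (hl : 2 ≤ ℓ) (hr : 2 ≤ r) (k : ℕ) (hk1 : 1 ≤ k) (hk2 : k ≤ ℓ - 1) :
    2 * ∑ d ∈ Finset.Icc 1 (r - 1),
        ((r : ℝ) - d) * Real.cos (2 * Real.pi * (k:ℝ) * d / ℓ) < r * ((r : ℝ) - 1) := by
  have hlt : ∑ d ∈ Finset.Icc 1 (r - 1),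
      ((r : ℝ) - d) * Real.cos (2 * Real.pi * (k:ℝ) * d / ℓ)
      < ∑ d ∈ Finset.Icc 1 (r - 1), ((r : ℝ) - d) := by
    apply Finset.sum_lt_sum
    · intro d hd
      simp only [Finset.mem_Icc] at hd
      have hrd : (0:ℝ) ≤ (r:ℝ) - d := by
        have : (d:ℝ) ≤ ((r-1 : ℕ):ℝ) := Nat.cast_le.mpr hd.2
        rw [Nat.cast_sub (by omega)] at this
        push_cast at this ⊢; linarith
      nlinarith [Real.cos_le_one (2 * Real.pi * (k:ℝ) * d / ℓ), hrd]
    · refine ⟨1, by simp [Finset.mem_Icc]; omega, ?_⟩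
      have hθ : Real.cos (2 * Real.pi * (k:ℝ) * 1 / ℓ) < 1 := by
        rcases lt_or_eq_of_le (Real.cos_le_one (2 * Real.pi * (k:ℝ) * 1 / ℓ)) with h | h
        · exact h
        · exfalso
          rw [Real.cos_eq_one_iff] at h
          obtain ⟨n, hn⟩ := h
          have hπ := Real.pi_pos
          have hℓ : (0:ℝ) < ℓ := by positivity
          have hkpos : (0:ℝ) < k := by exact_mod_cast hk1
          have hkl : (k:ℝ) < ℓ := by
            have : k < ℓ := by omega
            exact_mod_cast this
          have h1 : 2 * Real.pi * (k:ℝ) * 1 / ℓ > 0 := by positivity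
          have h2 : 2 * Real.pi * (k:ℝ) * 1 / ℓ < 2 * Real.pi := by
            rw [div_lt_iff₀ hℓ]; nlinarith
          have hn0 : (0:ℝ) < n := by nlinarith
          have hn1 : (n:ℝ) < 1 := by nlinarith
          have hi0 : (0:ℤ) < n := by exact_mod_cast hn0
          have hi1 : (n:ℤ) < 1 := by exact_mod_cast hn1
          omega
      have hrd : (0:ℝ) < (r:ℝ) - 1 := by
        have : (2:ℝ) ≤ r := by exact_mod_cast hr
        linarith
      calc ((r : ℝ) - (1:ℕ)) * Real.cos (2 * Real.pi * (k:ℝ) * (1:ℕ) / ℓ)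
          < ((r:ℝ) - (1:ℕ)) * 1 := by
            push_cast
            exact mul_lt_mul_of_pos_left (by exact_mod_cast hθ) hrd
        _ = (r:ℝ) - (1:ℕ) := by ring
  calc 2 * ∑ d ∈ Finset.Icc 1 (r - 1),
        ((r : ℝ) - d) * Real.cos (2 * Real.pi * (k:ℝ) * d / ℓ)
      < 2 * ∑ d ∈ Finset.Icc 1 (r - 1), ((r : ℝ) - d) := by linarith
    _ = r * ((r:ℝ) - 1) := by rw [gauss14 r hr]; ring

lemma sumw14 (ℓ r : ℕ) [NeZero ℓ] (hl : 2 ≤ ℓ) (hr : 2 ≤ r) (hrl : 2 * r ≤ ℓ) :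
    ∑ s : ZMod ℓ, (let d := min s.val (-s).val;
      if 1 ≤ d ∧ d ≤ r - 1 then ((r : ℝ) - d) else 0) = r * ((r:ℝ) - 1) := by
  set f : ZMod ℓ → ℝ := fun s => (let d := min s.val (-s).val;
      if 1 ≤ d ∧ d ≤ r - 1 then ((r : ℝ) - d) else 0) with hf
  have h1 : ∑ s : ZMod ℓ, f s = ∑ v ∈ Finset.range ℓ, f (v : ZMod ℓ) := by
    refine Finset.sum_nbij' (fun s => s.val) (fun v => (v : ZMod ℓ)) ?_ ?_ ?_ ?_ ?_
    · intro s _; exact Finset.mem_range.mpr (ZMod.val_lt s)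
    · intro v _; exact Finset.mem_univ _
    · intro s _; exact ZMod.natCast_rightInverse s
    · intro v hv; exact ZMod.val_cast_of_lt (Finset.mem_range.mp hv)
    · intro s _; rw [ZMod.natCast_rightInverse s]
  rw [h1]
  set S : Finset ℕ := Finset.Icc 1 (r-1) ∪ Finset.Icc (ℓ-(r-1)) (ℓ-1) with hS
  have hsub : S ⊆ Finset.range ℓ := by
    intro v hv; simp only [hS, Finset.mem_union, Finset.mem_Icc] at hv
    rw [Finset.mem_range]; omega
  have hzero : ∀ v ∈ Finset.range ℓ, v ∉ S → f (v : ZMod ℓ) = 0 := by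
    intro v hv hvS
    simp only [hS, Finset.mem_union, Finset.mem_Icc, not_or, not_and_or, not_le] at hvS
    rw [Finset.mem_range] at hv
    by_cases hv0 : v = 0
    · subst hv0; simp [hf, ZMod.val_zero]
    · have hval : ((v:ZMod ℓ)).val = v := ZMod.val_cast_of_lt hv
      have hne : (v : ZMod ℓ) ≠ 0 := by
        intro h; rw [← hval] at hv0; simp [h] at hv0
      simp only [hf, ZMod.neg_val, hval, if_neg hne]
      rw [if_neg]
      rintro ⟨ha, hb⟩
      omega
  rw [← Finset.sum_subset hsub hzero]
  have hdisj : Disjoint (Finset.Icc 1 (r-1)) (Finset.Icc (ℓ-(r-1)) (ℓ-1)) := by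
    rw [Finset.disjoint_left]
    intro a ha hb
    simp only [Finset.mem_Icc] at ha hb
    omega
  rw [hS, Finset.sum_union hdisj]
  have hval1 : ∀ v ∈ Finset.Icc 1 (r-1), f (v : ZMod ℓ) = (r:ℝ) - v := by
    intro v hv
    simp only [Finset.mem_Icc] at hv
    have hvℓ : v < ℓ := by omega
    have hval : ((v:ZMod ℓ)).val = v := ZMod.val_cast_of_lt hvℓ
    have hne : (v : ZMod ℓ) ≠ 0 := by
      intro h; rw [h, ZMod.val_zero] at hval; omega
    simp only [hf, ZMod.neg_val, hval, if_neg hne]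
    have hmin : min v (ℓ - v) = v := by omega
    rw [hmin, if_pos ⟨hv.1, hv.2⟩]
  have hval2 : ∀ v ∈ Finset.Icc (ℓ-(r-1)) (ℓ-1), f (v : ZMod ℓ) = (r:ℝ) - ((ℓ - v : ℕ):ℝ) := by
    intro v hv
    simp only [Finset.mem_Icc] at hv
    have hvℓ : v < ℓ := by omega
    have hval : ((v:ZMod ℓ)).val = v := ZMod.val_cast_of_lt hvℓ
    have hne : (v : ZMod ℓ) ≠ 0 := by
      intro h; rw [h, ZMod.val_zero] at hval; omega
    simp only [hf, ZMod.neg_val, hval, if_neg hne]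
    have hmin : min v (ℓ - v) = ℓ - v := by omega
    rw [hmin, if_pos ⟨by omega, by omega⟩]
  rw [Finset.sum_congr rfl hval1, Finset.sum_congr rfl hval2]
  have h2 : ∑ v ∈ Finset.Icc (ℓ-(r-1)) (ℓ-1), ((r:ℝ) - ((ℓ - v : ℕ):ℝ))
      = ∑ d ∈ Finset.Icc 1 (r-1), ((r:ℝ) - d) := by
    refine Finset.sum_nbij' (fun v => ℓ - v) (fun d => ℓ - d) ?_ ?_ ?_ ?_ ?_
    · intro v hv; simp only [Finset.mem_Icc] at hv ⊢; omega
    · intro d hd; simp only [Finset.mem_Icc] at hd ⊢; omega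
    · intro v hv; simp only [Finset.mem_Icc] at hv; show ℓ - (ℓ - v) = v; omega
    · intro d hd; simp only [Finset.mem_Icc] at hd; show ℓ - (ℓ - d) = d; omega
    · intro v hv; simp only [Finset.mem_Icc] at hv
      show (r:ℝ) - ((ℓ - v : ℕ):ℝ) = (r:ℝ) - ((ℓ - v : ℕ):ℝ); rfl
  rw [h2, gauss14 r hr]; ring

lemma rowsum14' (ℓ m : ℕ) [NeZero ℓ] (w : ZMod ℓ → ℝ) (x : Fin m → ZMod ℓ) (i : Fin m) :
    ∑ y : Fin m → ZMod ℓ,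
      (if (∀ j, j ≠ i → x j = y j) then w (x i - y i) else 0) = ∑ s : ZMod ℓ, w s := by
  rw [Finset.sum_ite, Finset.sum_const_zero, add_zero]
  have himg : Finset.univ.filter (fun y : Fin m → ZMod ℓ => ∀ j, j ≠ i → x j = y j)
      = Finset.univ.image (fun t : ZMod ℓ => Function.update x i t) := by
    ext y
    simp only [Finset.mem_filter, Finset.mem_univ, true_and, Finset.mem_image]
    constructor
    · intro h
      refine ⟨y i, funext fun j => ?_⟩
      by_cases hj : j = i
      · subst hj; rw [Function.update_self]
      · rw [Function.update_of_ne hj]; exact h j hj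
    · rintro ⟨t, rfl⟩ j hj
      rw [Function.update_of_ne hj]
  rw [himg, Finset.sum_image (fun a _ b _ h => Function.update_injective x i h)]
  have hupd : ∀ t : ZMod ℓ, x i - Function.update x i t i = x i - t := by
    intro t; rw [Function.update_self]
  simp only [hupd]
  exact Fintype.sum_equiv (Equiv.subLeft (x i)) _ _ (fun t => rfl)

lemma rowsum14 (ℓ m : ℕ) [NeZero ℓ] (w : ZMod ℓ → ℝ) (x : Fin m → ZMod ℓ) :
    ∑ y : Fin m → ZMod ℓ, ∑ i : Fin m,
      (if (∀ j, j ≠ i → x j = y j) then w (x i - y i) else 0)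
    = m * (∑ s : ZMod ℓ, w s) := by
  rw [Finset.sum_comm]
  rw [Finset.sum_congr rfl (fun i _ => rowsum14' ℓ m w x i)]
  rw [Finset.sum_const, Finset.card_univ, Fintype.card_fin, nsmul_eq_mul]

lemma wneg14 (ℓ r : ℕ) [NeZero ℓ] (hl : 2 ≤ ℓ) (hr : 2 ≤ r) :
    (let d := min (-1 : ZMod ℓ).val (-(-1) : ZMod ℓ).val;
     if 1 ≤ d ∧ d ≤ r - 1 then ((r : ℝ) - d) else 0) = (r:ℝ) - 1 := by
  haveI : Fact (1 < ℓ) := ⟨hl⟩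
  have h1 : ((1 : ZMod ℓ)).val = 1 := ZMod.val_one ℓ
  have hne : (1 : ZMod ℓ) ≠ 0 := one_ne_zero
  have hneg : (-(1 : ZMod ℓ)).val = ℓ - 1 := by rw [ZMod.neg_val, if_neg hne, h1]
  simp only [neg_neg, hneg, h1]
  have hmin : min (ℓ - 1) 1 = 1 := by omega
  rw [hmin, if_pos ⟨le_refl 1, by omega⟩]
  norm_num

lemma step14 (ℓ m r : ℕ) [NeZero ℓ] (hl : 2 ≤ ℓ) (hr : 2 ≤ r)
    (x : Fin m → ZMod ℓ) (i : Fin m) :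
    ∑ j : Fin m, (if (∀ j', j' ≠ j → x j' = Function.update x i (x i + 1) j')
      then (let d := min ((x j - Function.update x i (x i + 1) j).val)
                ((-(x j - Function.update x i (x i + 1) j)).val);
            if 1 ≤ d ∧ d ≤ r - 1 then ((r : ℝ) - d) else 0) else 0)
    = (r:ℝ) - 1 := by
  haveI : Fact (1 < ℓ) := ⟨hl⟩
  rw [Fintype.sum_eq_single i]
  · rw [if_pos]
    · have hxi : x i - Function.update x i (x i + 1) i = -1 := by
        rw [Function.update_self]; ring
      rw [hxi]
      exact wneg14 ℓ r hl hr
    · intro j' hj'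
      rw [Function.update_of_ne hj']
  · intro j hj
    rw [if_neg]
    intro h
    have h2 := h i (Ne.symm hj)
    rw [Function.update_self] at h2
    have h3 : (1 : ZMod ℓ) = 0 := left_eq_add.mp h2
    exact one_ne_zero h3

/-- For `1 ≤ k ≤ ℓ-1`, the circulant eigenvalue
`α(k) = 2 Σ_{d=1}^{r-1}(r-d)cos(2πkd/ℓ)` satisfies `α(k) < r(r-1)`;
consequently the clique Laplacian `mr(r-1)I - A_cl` of the periodic
hyperlattice on `ℤ_ℓ^m` with window size `r` has `0` as a simple eigenvalue,
i.e. the hyperlattice is connected. -/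
theorem stmt14 (ℓ m r : ℕ) (hl : 2 ≤ ℓ) (hm : 1 ≤ m) (hr : 2 ≤ r)
    (hrl : 2 * r ≤ ℓ) [NeZero ℓ]
    (α : ℕ → ℝ)
    (hα : α = fun (k : ℕ) => 2 * ∑ d ∈ Finset.Icc 1 (r - 1),
        ((r : ℝ) - d) * Real.cos (2 * Real.pi * (k:ℝ) * d / ℓ))
    (w : ZMod ℓ → ℝ)
    (hw : w = fun t =>
        (let d := min t.val (-t).val
         if 1 ≤ d ∧ d ≤ r - 1 then ((r : ℝ) - d) else 0))
    (Acl Lcl : Matrix (Fin m → ZMod ℓ) (Fin m → ZMod ℓ) ℝ)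
    (hA : Acl = Matrix.of fun x y =>
        ∑ i : Fin m, if (∀ j, j ≠ i → x j = y j) then w (x i - y i) else 0)
    (hL : Lcl = ((m : ℝ) * r * ((r : ℝ) - 1)) •
        (1 : Matrix (Fin m → ZMod ℓ) (Fin m → ZMod ℓ) ℝ) - Acl) :
    (∀ k : ℕ, 1 ≤ k → k ≤ ℓ - 1 → α k < r * ((r : ℝ) - 1)) ∧
    Module.finrank ℝ ↥(Module.End.eigenspace (Matrix.toLin' Lcl) 0) = 1 := by
  haveI : Fact (1 < ℓ) := ⟨hl⟩
  constructor
  · intro k hk1 hk2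
    rw [hα]
    exact part1of14 ℓ r hl hr k hk1 hk2
  -- Part 2
  have hwsum : ∑ s : ZMod ℓ, w s = r * ((r:ℝ) - 1) := by
    rw [hw]; exact sumw14 ℓ r hl hr hrl
  have hrow : ∀ x, ∑ y, Acl x y = m * (r * ((r:ℝ) - 1)) := by
    intro x; rw [hA]; simp only [Matrix.of_apply]
    rw [rowsum14 ℓ m w x, hwsum]
  have hApos : ∀ x y, 0 ≤ Acl x y := by
    intro x y; rw [hA]; simp only [Matrix.of_apply]
    apply Finset.sum_nonneg
    intro i _
    split_ifs with h
    · rw [hw]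
      dsimp only
      split_ifs with h2
      · have hc : ((min (x i - y i).val (-(x i - y i)).val : ℕ):ℝ) ≤ ((r-1:ℕ):ℝ) :=
          Nat.cast_le.mpr h2.2
        rw [Nat.cast_sub (by omega), Nat.cast_one] at hc
        linarith
      · exact le_refl _
    · exact le_refl _
  have hstep : ∀ (x : Fin m → ZMod ℓ) (i : Fin m),
      Acl x (Function.update x i (x i + 1)) = (r:ℝ) - 1 := by
    intro x i
    rw [hA]
    simp only [Matrix.of_apply, hw]
    exact step14 ℓ m r hl hr x i
  have hr1 : (0:ℝ) < (r:ℝ) - 1 := by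
    have : (2:ℝ) ≤ r := by exact_mod_cast hr
    linarith
  -- the constant vector is in the kernel
  set u : (Fin m → ZMod ℓ) → ℝ := fun _ => (1:ℝ) with hu
  have hAv : ∀ (v : (Fin m → ZMod ℓ) → ℝ) x, (Acl *ᵥ v) x = ∑ y, Acl x y * v y := by
    intro v x; simp [Matrix.mulVec, dotProduct]
  have hLv : ∀ (v : (Fin m → ZMod ℓ) → ℝ) x,
      (Lcl *ᵥ v) x = ((m:ℝ) * r * ((r:ℝ) - 1)) * v x - ∑ y, Acl x y * v y := by
    intro v x
    rw [hL, Matrix.sub_mulVec, Matrix.smul_mulVec, Matrix.one_mulVec]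
    simp only [Pi.sub_apply, Pi.smul_apply, smul_eq_mul]
    rw [hAv]
  have hLu : Lcl *ᵥ u = 0 := by
    funext x
    rw [hLv]
    simp only [hu, mul_one, Pi.zero_apply]
    rw [hrow x]
    ring
  -- kernel vectors are constant
  have hker : ∀ v : (Fin m → ZMod ℓ) → ℝ, Lcl *ᵥ v = 0 → ∀ x y, v x = v y := by
    intro v hv
    have hbal : ∀ x, ∑ y, Acl x y * (v x - v y) = 0 := by
      intro x
      have hx : (Lcl *ᵥ v) x = 0 := by rw [hv]; rfl
      rw [hLv] at hx
      have hexp : ∑ y, Acl x y * (v x - v y)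
          = (∑ y, Acl x y) * v x - ∑ y, Acl x y * v y := by
        rw [Finset.sum_mul, ← Finset.sum_sub_distrib]
        apply Finset.sum_congr rfl
        intro y _; ring
      rw [hexp, hrow x]
      ring_nf
      ring_nf at hx
      linarith
    obtain ⟨x₀, -, hx₀⟩ := Finset.exists_max_image Finset.univ v ⟨fun _ => 0, Finset.mem_univ _⟩
    have hmax : ∀ y, v y ≤ v x₀ := fun y => hx₀ y (Finset.mem_univ y)
    have hstep1 : ∀ x, v x = v x₀ → ∀ i, v (Function.update x i (x i + 1)) = v x₀ := by
      intro x hx i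
      have h0 : ∑ y, Acl x y * (v x₀ - v y) = 0 := by rw [← hx]; exact hbal x
      have hnn : ∀ y ∈ Finset.univ, 0 ≤ Acl x y * (v x₀ - v y) :=
        fun y _ => mul_nonneg (hApos x y) (by linarith [hmax y])
      have hall := (Finset.sum_eq_zero_iff_of_nonneg hnn).mp h0
      have hy := hall (Function.update x i (x i + 1)) (Finset.mem_univ _)
      rw [hstep x i] at hy
      rcases mul_eq_zero.mp hy with h | h
      · linarith
      · linarith [hmax (Function.update x i (x i + 1))]
    have hiter : ∀ (c : ℕ) (x : Fin m → ZMod ℓ), v x = v x₀ →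
        ∀ i, v (Function.update x i (x i + (c : ZMod ℓ))) = v x₀ := by
      intro c
      induction c with
      | zero =>
        intro x hx i
        simpa [Function.update_eq_self] using hx
      | succ c ih =>
        intro x hx i
        have h1 := hstep1 (Function.update x i (x i + (c : ZMod ℓ))) (ih x hx i) i
        rw [Function.update_self, Function.update_idem] at h1
        have harg : x i + (c : ZMod ℓ) + 1 = x i + ((c + 1 : ℕ) : ZMod ℓ) := by
          push_cast; ring
        rwa [harg] at h1
    have hcoord : ∀ k : ℕ, k ≤ m → ∀ y : Fin m → ZMod ℓ,
        (∀ j : Fin m, k ≤ (j:ℕ) → y j = x₀ j) → v y = v x₀ := by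
      intro k
      induction k with
      | zero =>
        intro _ y hy
        have : y = x₀ := funext fun j => hy j (Nat.zero_le _)
        rw [this]
      | succ k ih =>
        intro hk y hy
        have hkm : k < m := by omega
        set i : Fin m := ⟨k, hkm⟩ with hi
        have hy' : ∀ j : Fin m, k ≤ (j:ℕ) → Function.update y i (x₀ i) j = x₀ j := by
          intro j hj
          by_cases hji : j = i
          · subst hji; rw [Function.update_self]
          · rw [Function.update_of_ne hji]
            apply hy j
            have hjk : (j:ℕ) ≠ k := by
              intro hcon
              exact hji (Fin.ext (by rw [hcon, hi]))
            omega
        have hvy' := ih (by omega) (Function.update y i (x₀ i)) hy'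
        have h2 := hiter ((y i - x₀ i).val) (Function.update y i (x₀ i)) hvy' i
        have harg : Function.update (Function.update y i (x₀ i)) i
            (Function.update y i (x₀ i) i + (((y i - x₀ i).val : ℕ) : ZMod ℓ)) = y := by
          rw [Function.update_self, Function.update_idem]
          have hv : x₀ i + (((y i - x₀ i).val : ℕ) : ZMod ℓ) = y i := by
            rw [ZMod.natCast_rightInverse (y i - x₀ i)]; ring
          rw [hv, Function.update_eq_self]
        rwa [harg] at h2
    intro x y
    have hfx : ∀ j : Fin m, m ≤ (j:ℕ) → x j = x₀ j :=
      fun j hj => absurd hj (Nat.not_le.mpr j.isLt)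
    have hfy : ∀ j : Fin m, m ≤ (j:ℕ) → y j = x₀ j :=
      fun j hj => absurd hj (Nat.not_le.mpr j.isLt)
    rw [hcoord m le_rfl x hfx, hcoord m le_rfl y hfy]
  -- eigenspace equality
  have heig : Module.End.eigenspace (Matrix.toLin' Lcl) 0 = Submodule.span ℝ {u} := by
    rw [Module.End.eigenspace_zero]
    ext v
    rw [LinearMap.mem_ker, Matrix.toLin'_apply, Submodule.mem_span_singleton]
    constructor
    · intro hv
      refine ⟨v (fun _ => 0), funext fun x => ?_⟩
      simp only [Pi.smul_apply, hu, smul_eq_mul, mul_one]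
      exact hker v hv (fun _ => 0) x
    · rintro ⟨a, rfl⟩
      rw [Matrix.mulVec_smul, hLu]
      simp
  rw [heig]
  apply finrank_span_singleton
  intro h
  have h0 := congrFun h (fun _ => 0)
  simp only [hu, Pi.zero_apply] at h0
  exact one_ne_zero h0
end
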